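/- Let γ > 0 and let l be a positive integer with 2l > γ + m. Then for every integer μ ≥ 2 one has ∫_0^π D_{μ,l}(t) t^γ α(t) dt ≤ (π^{2l} / 2^a) · (2/μ)^{γ+m-2l} · (1/(γ+m) + 1/(2l-(γ+m))). -/

import Mathlib

/-!
Put `c = 2/μ` and split `(0, π)` at `c`. Since `|sin (μx)| ≤ μ |sin x|`, the kernel is at most
`μ^{2l} ≤ (π/c)^{2l}` near the origin, and by Jordan's inequality `sin (t/2) ≥ t/π` it is at
most `(π/t)^{2l}` away from it; the weight is at most `t^{a+b}/2^a`. The first piece is then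
bounded by `∫_0^c t^{γ+m-1}`, the second by `∫_c^∞ t^{γ+m-1-2l}`, which converges as `2l > γ + m`.
-/

open MeasureTheory Real Set

/-- The kernel `D_{μ,l}`. -/
noncomputable def jacksonKernel (μ l : ℕ) (t : ℝ) : ℝ :=
  (sin (μ * t / 2) / sin (t / 2)) ^ (2 * l)

/-- The weight `α`. -/
noncomputable def jacobiWeight (a b : ℕ) (t : ℝ) : ℝ :=
  sin (t / 2) ^ a * sin t ^ b

noncomputable def weightedJacksonKernel (μ l a b : ℕ) (γ t : ℝ) : ℝ :=
  jacksonKernel μ l t * (t ^ γ * jacobiWeight a b t)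

lemma div_pow_mul_rpow (x : ℝ) {t : ℝ} (ht : 0 < t) (n : ℕ) (p : ℝ) :
    (x / t) ^ n * t ^ p = x ^ n * t ^ (p - n) := by
  rw [rpow_sub ht, rpow_natCast, div_pow]
  field_simp

lemma abs_sin_nat_mul_le (n : ℕ) (x : ℝ) : |sin (n * x)| ≤ n * |sin x| := by
  induction n with
  | zero => simp
  | succ n ih =>
    calc |sin ((n + 1 : ℕ) * x)| = |sin (n * x) * cos x + cos (n * x) * sin x| := by
          rw [← sin_add]; push_cast; ring_nf
      _ ≤ |sin (n * x)| * |cos x| + |cos (n * x)| * |sin x| := by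
          rw [← abs_mul, ← abs_mul]; exact abs_add_le _ _
      _ ≤ |sin (n * x)| * 1 + 1 * |sin x| := by
          gcongr <;> exact abs_cos_le_one _
      _ ≤ (n + 1 : ℕ) * |sin x| := by push_cast; linarith

lemma div_pi_le_sin_half {t : ℝ} (ht0 : 0 ≤ t) (htπ : t ≤ π) : t / π ≤ sin (t / 2) := by
  calc t / π = 2 / π * (t / 2) := by ring
    _ ≤ sin (t / 2) := mul_le_sin (by linarith) (by linarith)

lemma jacksonKernel_nonneg (μ l : ℕ) (t : ℝ) : 0 ≤ jacksonKernel μ l t :=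
  (even_two_mul l).pow_nonneg _

lemma jacksonKernel_le_natCast_pow (μ l : ℕ) (t : ℝ) : jacksonKernel μ l t ≤ (μ : ℝ) ^ (2 * l) := by
  rw [jacksonKernel, ← (even_two_mul l).pow_abs]
  gcongr
  rw [abs_div, mul_div_assoc]
  exact div_le_of_le_mul₀ (abs_nonneg _) (Nat.cast_nonneg μ) (abs_sin_nat_mul_le μ (t / 2))

lemma jacksonKernel_le_pi_div_pow (μ l : ℕ) {t : ℝ} (ht0 : 0 < t) (htπ : t ≤ π) :
    jacksonKernel μ l t ≤ (π / t) ^ (2 * l) := by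
  have hs : t / π ≤ sin (t / 2) := div_pi_le_sin_half ht0.le htπ
  have hs0 : 0 < t / π := div_pos ht0 pi_pos
  rw [jacksonKernel, ← (even_two_mul l).pow_abs]
  gcongr
  calc |sin (μ * t / 2) / sin (t / 2)| = |sin (μ * t / 2)| / sin (t / 2) := by
        rw [abs_div, abs_of_pos (hs0.trans_le hs)]
    _ ≤ 1 / (t / π) := by gcongr; exact abs_sin_le_one _
    _ = π / t := one_div_div t π

lemma jacobiWeight_nonneg (a b : ℕ) {t : ℝ} (ht0 : 0 ≤ t) (htπ : t ≤ π) :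
    0 ≤ jacobiWeight a b t := by
  have := sin_nonneg_of_nonneg_of_le_pi ht0 htπ
  have := sin_nonneg_of_nonneg_of_le_pi (x := t / 2) (by linarith) (by linarith [pi_pos])
  unfold jacobiWeight
  positivity

lemma jacobiWeight_le (a b : ℕ) {t : ℝ} (ht0 : 0 ≤ t) (htπ : t ≤ π) :
    jacobiWeight a b t ≤ t ^ (a + b) / 2 ^ a := by
  have := sin_nonneg_of_nonneg_of_le_pi ht0 htπ
  have := sin_nonneg_of_nonneg_of_le_pi (x := t / 2) (by linarith) (by linarith [pi_pos])
  calc jacobiWeight a b t ≤ (t / 2) ^ a * t ^ b := by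
        unfold jacobiWeight
        gcongr
        exacts [sin_le (by linarith), sin_le ht0]
    _ = t ^ (a + b) / 2 ^ a := by rw [div_pow, pow_add]; ring

lemma two_div_natCast_lt_pi {μ : ℕ} (hμ : 0 < μ) : 2 / (μ : ℝ) < π :=
  (div_le_self zero_le_two (Nat.one_le_cast.2 hμ)).trans_lt (by linarith [pi_gt_three])

lemma integrableOn_and_setIntegral_le_of_le {X : Type*} [MeasurableSpace X] {μ : Measure X}
    {s : Set X} {f g : X → ℝ} (hs : MeasurableSet s)
    (hf : AEStronglyMeasurable f (μ.restrict s)) (hg : IntegrableOn g s μ)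
    (h0 : ∀ x ∈ s, 0 ≤ f x) (hle : ∀ x ∈ s, f x ≤ g x) :
    IntegrableOn f s μ ∧ ∫ x in s, f x ∂μ ≤ ∫ x in s, g x ∂μ := by
  have hfi : IntegrableOn f s μ := hg.mono' hf <| ae_restrict_of_forall_mem hs fun x hx ↦ by
    rw [norm_of_nonneg (h0 x hx)]; exact hle x hx
  exact ⟨hfi, setIntegral_mono_on hfi hg hs hle⟩

lemma integrableOn_Ioc_and_setIntegral_le_of_le_rpow {f : ℝ → ℝ} {c p C : ℝ}
    (hc : 0 ≤ c) (hp : -1 < p) (hf : AEStronglyMeasurable f (volume.restrict (Ioc 0 c)))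
    (h0 : ∀ t ∈ Ioc 0 c, 0 ≤ f t) (hle : ∀ t ∈ Ioc 0 c, f t ≤ C * t ^ p) :
    IntegrableOn f (Ioc 0 c) ∧ ∫ t in Ioc 0 c, f t ≤ C * (c ^ (p + 1) / (p + 1)) := by
  have hg : IntegrableOn (fun t ↦ C * t ^ p) (Ioc 0 c) :=
    ((intervalIntegral.intervalIntegrable_rpow' hp).const_mul C).1
  refine (integrableOn_and_setIntegral_le_of_le measurableSet_Ioc hf hg h0 hle).imp_right
    fun h ↦ h.trans_eq ?_
  rw [← intervalIntegral.integral_of_le hc, intervalIntegral.integral_const_mul,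
    integral_rpow (Or.inl hp), zero_rpow (by linarith), sub_zero]

lemma integrableOn_and_setIntegral_le_of_le_rpow_of_subset_Ioi {f : ℝ → ℝ} {s : Set ℝ}
    {c q C : ℝ} (hs : MeasurableSet s) (hsc : s ⊆ Ioi c) (hc : 0 < c) (hq : q < -1)
    (hC : 0 ≤ C) (hf : AEStronglyMeasurable f (volume.restrict s))
    (h0 : ∀ t ∈ s, 0 ≤ f t) (hle : ∀ t ∈ s, f t ≤ C * t ^ q) :
    IntegrableOn f s ∧ ∫ t in s, f t ≤ C * (-c ^ (q + 1) / (q + 1)) := by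
  have hg : IntegrableOn (fun t ↦ C * t ^ q) (Ioi c) :=
    (integrableOn_Ioi_rpow_of_lt hq hc).const_mul C
  refine (integrableOn_and_setIntegral_le_of_le hs hf (hg.mono_set hsc) h0 hle).imp_right
    fun h ↦ h.trans ?_
  calc ∫ t in s, C * t ^ q ≤ ∫ t in Ioi c, C * t ^ q :=
        setIntegral_mono_set hg (ae_restrict_of_forall_mem measurableSet_Ioi fun t ht ↦
          mul_nonneg hC (rpow_nonneg (hc.trans ht).le q)) (Filter.Eventually.of_forall hsc)
    _ = C * (-c ^ (q + 1) / (q + 1)) := by rw [integral_const_mul, integral_Ioi_rpow_of_lt hq hc]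

section WeightedJacksonKernel

variable (μ l a b : ℕ) (γ : ℝ)

lemma measurable_weightedJacksonKernel : Measurable (weightedJacksonKernel μ l a b γ) := by
  unfold weightedJacksonKernel jacksonKernel jacobiWeight; fun_prop

lemma weightedJacksonKernel_nonneg {t : ℝ} (ht0 : 0 ≤ t) (htπ : t ≤ π) :
    0 ≤ weightedJacksonKernel μ l a b γ t :=
  mul_nonneg (jacksonKernel_nonneg μ l t)
    (mul_nonneg (rpow_nonneg ht0 γ) (jacobiWeight_nonneg a b ht0 htπ))

variable {μ l a b γ}

lemma weightedJacksonKernel_le {t B : ℝ} (ht0 : 0 < t) (htπ : t ≤ π)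
    (hB : jacksonKernel μ l t ≤ B) :
    weightedJacksonKernel μ l a b γ t ≤ B / 2 ^ a * t ^ (γ + a + b) := by
  have hpow : t ^ (γ + a + b) = t ^ γ * t ^ (a + b) := by
    rw [add_assoc, rpow_add ht0, ← Nat.cast_add, rpow_natCast]
  have := jacobiWeight_nonneg a b ht0.le htπ
  have := (jacksonKernel_nonneg μ l t).trans hB
  calc weightedJacksonKernel μ l a b γ t ≤ B * (t ^ γ * (t ^ (a + b) / 2 ^ a)) := by
        unfold weightedJacksonKernel
        gcongr
        exact jacobiWeight_le a b ht0.le htπ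
    _ = B / 2 ^ a * t ^ (γ + a + b) := by rw [hpow]; ring

lemma integrableOn_and_setIntegral_weightedJacksonKernel_Ioc_le (hμ : 0 < μ)
    (hγ : -1 < γ + a + b) :
    IntegrableOn (weightedJacksonKernel μ l a b γ) (Ioc (0 : ℝ) (2 / μ)) ∧
      ∫ t in Ioc (0 : ℝ) (2 / μ), weightedJacksonKernel μ l a b γ t ≤
        π ^ (2 * l) / 2 ^ a * (2 / μ) ^ (γ + (a + b + 1) - 2 * l) * (1 / (γ + (a + b + 1))) := by
  have hc : 0 < 2 / (μ : ℝ) := div_pos two_pos (Nat.cast_pos.2 hμ)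
  have hcπ := two_div_natCast_lt_pi hμ
  have hμc : (μ : ℝ) ≤ π / (2 / μ) := by
    rw [div_div_eq_mul_div, le_div_iff₀ two_pos]; nlinarith [pi_gt_three]
  refine (integrableOn_Ioc_and_setIntegral_le_of_le_rpow (C := (π / (2 / μ)) ^ (2 * l) / 2 ^ a)
    hc.le hγ (measurable_weightedJacksonKernel μ l a b γ).aestronglyMeasurable
    (fun t ht ↦ weightedJacksonKernel_nonneg μ l a b γ ht.1.le (ht.2.trans hcπ.le))
    fun t ht ↦ weightedJacksonKernel_le ht.1 (ht.2.trans hcπ.le)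
      ((jacksonKernel_le_natCast_pow μ l t).trans (by gcongr))).imp_right fun h ↦ h.trans_eq ?_
  have := div_pow_mul_rpow π hc (2 * l) (γ + a + b + 1)
  push_cast at this
  rw [show γ + (a + b + 1) - 2 * l = γ + a + b + 1 - 2 * l by ring]
  linear_combination this / 2 ^ a / (γ + a + b + 1)

lemma integrableOn_and_setIntegral_weightedJacksonKernel_Ioo_le (hμ : 0 < μ)
    (hl : γ + (a + b + 1) < 2 * l) :
    IntegrableOn (weightedJacksonKernel μ l a b γ) (Ioo (2 / (μ : ℝ)) π) ∧
      ∫ t in Ioo (2 / (μ : ℝ)) π, weightedJacksonKernel μ l a b γ t ≤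
        π ^ (2 * l) / 2 ^ a * (2 / μ) ^ (γ + (a + b + 1) - 2 * l) *
          (1 / (2 * l - (γ + (a + b + 1)))) := by
  have hc : 0 < 2 / (μ : ℝ) := div_pos two_pos (Nat.cast_pos.2 hμ)
  refine (integrableOn_and_setIntegral_le_of_le_rpow_of_subset_Ioi (C := π ^ (2 * l) / 2 ^ a)
    (q := γ + a + b - 2 * l) measurableSet_Ioo Ioo_subset_Ioi_self hc (by linarith)
    (by positivity) (measurable_weightedJacksonKernel μ l a b γ).aestronglyMeasurable
    (fun t ht ↦ weightedJacksonKernel_nonneg μ l a b γ (hc.trans ht.1).le ht.2.le)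
    fun t ht ↦ ?_).imp_right fun h ↦ h.trans_eq ?_
  · have ht0 : 0 < t := hc.trans ht.1
    calc weightedJacksonKernel μ l a b γ t ≤ (π / t) ^ (2 * l) / 2 ^ a * t ^ (γ + a + b) :=
          weightedJacksonKernel_le ht0 ht.2.le (jacksonKernel_le_pi_div_pow μ l ht0 ht.2.le)
      _ = π ^ (2 * l) / 2 ^ a * t ^ (γ + a + b - 2 * l) := by
          rw [div_mul_eq_mul_div, div_pow_mul_rpow π ht0]; push_cast; ring
  · rw [show γ + a + b - 2 * l + 1 = γ + (a + b + 1) - 2 * l by ring, neg_div, ← div_neg,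
      neg_sub]
    ring

end WeightedJacksonKernel

theorem stmt_8_general (a b : ℕ) (m : ℕ) (hm : m = a + b + 1)
    (γ : ℝ) (hγ : 0 < γ) (l : ℕ)
    (h2l : γ + (m : ℝ) < 2 * l) :
    ∀ μ : ℕ, 2 ≤ μ →
      (∫ t in Set.Ioo (0 : ℝ) π,
          (Real.sin (μ * t / 2) / Real.sin (t / 2)) ^ (2 * l) *
            (t ^ γ * ((Real.sin (t / 2)) ^ a * (Real.sin t) ^ b)))
        ≤ (π ^ (2 * l) / 2 ^ a) * (2 / (μ : ℝ)) ^ (γ + m - 2 * l) *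
            (1 / (γ + m) + 1 / (2 * l - (γ + m))) := by
  intro μ hμ
  subst hm
  push_cast at h2l ⊢
  have hμ0 : 0 < μ := by omega
  have hc : 0 < 2 / (μ : ℝ) := div_pos two_pos (Nat.cast_pos.2 hμ0)
  obtain ⟨hi₁, hb₁⟩ := integrableOn_and_setIntegral_weightedJacksonKernel_Ioc_le (l := l) hμ0
    (neg_one_lt_zero.trans (by positivity : 0 < γ + a + b))
  obtain ⟨hi₂, hb₂⟩ := integrableOn_and_setIntegral_weightedJacksonKernel_Ioo_le hμ0 h2l
  rw [← Ioc_union_Ioo_eq_Ioo hc.le (two_div_natCast_lt_pi hμ0), mul_add]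
  change ∫ t in _, weightedJacksonKernel μ l a b γ t ≤ _
  rw [setIntegral_union (Ioc_disjoint_Ioi_same.mono_right Ioo_subset_Ioi_self)
    measurableSet_Ioo hi₁ hi₂]
  exact add_le_add hb₁ hb₂

/-- With `m = a + b + 1`, `α(t) = sin(t/2)^a (sin t)^b` and
`D_{μ,l}(t) = (sin(μt/2)/sin(t/2))^(2l)`, for `γ > 0`, `l ≥ 1` with `2l > γ + m`
and every integer `μ ≥ 2`,
`∫_0^π D_{μ,l}(t) t^γ α(t) dt ≤ (π^(2l)/2^a) (2/μ)^(γ+m-2l) (1/(γ+m) + 1/(2l-(γ+m)))`. -/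
theorem stmt_8 (a b : ℕ) (m : ℕ) (hm : m = a + b + 1)
    (γ : ℝ) (hγ : 0 < γ) (l : ℕ) (hl : 1 ≤ l)
    (h2l : γ + (m : ℝ) < 2 * l) :
    ∀ μ : ℕ, 2 ≤ μ →
      (∫ t in Set.Ioo (0 : ℝ) π,
          (Real.sin (μ * t / 2) / Real.sin (t / 2)) ^ (2 * l) *
            (t ^ γ * ((Real.sin (t / 2)) ^ a * (Real.sin t) ^ b)))
        ≤ (π ^ (2 * l) / 2 ^ a) * (2 / (μ : ℝ)) ^ (γ + m - 2 * l) *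
            (1 / (γ + m) + 1 / (2 * l - (γ + m))) :=
  stmt_8_general a b m hm γ hγ l h2l
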